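/- arXiv:2605.01279 — 2 statements merged into one kernel-verified Lean document; each statement's English description precedes it below -/
import Mathlib

section
/- Let S be a word over {O,U} of even length, and let S' be the cyclic rotation of S by one position (moving the first letter to the end). Then Φ(S') = −Φ(S). Hence |Φ| is invariant under cyclic rotation, so the OU number Φ(w) := |Φ(S)| of a cyclic word is well-defined independent of the choice of starting letter. -/
inductive Letter : Type
  | O : Letter
  | U : Letter
  deriving DecidableEq, BEq, Repr

open Letter

/-- number of O's in a word -/
def countO (w : List Letter) : ℕ := w.count O

/-- number of U's in a word -/
def countU (w : List Letter) : ℕ := w.count U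

/-- number of O's in odd 1-based positions (even 0-based index) -/
def NOo (w : List Letter) : ℕ := ((w.zipIdx.map Prod.swap).filter (fun p => p.1 % 2 == 0 && p.2 == O)).length

/-- number of O's in even 1-based positions -/
def NOe (w : List Letter) : ℕ := ((w.zipIdx.map Prod.swap).filter (fun p => p.1 % 2 == 1 && p.2 == O)).length

/-- number of U's in odd 1-based positions -/
def NUo (w : List Letter) : ℕ := ((w.zipIdx.map Prod.swap).filter (fun p => p.1 % 2 == 0 && p.2 == U)).length

/-- number of U's in even 1-based positions -/
def NUe (w : List Letter) : ℕ := ((w.zipIdx.map Prod.swap).filter (fun p => p.1 % 2 == 1 && p.2 == U)).length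

/-- twice the OU signed quantity: N^O_e + N^U_o − N^O_o − N^U_e -/
def twoPhi (w : List Letter) : ℤ := (NOe w : ℤ) + NUo w - NOo w - NUe w

/-- the (signed) OU number Φ of a word of even length -/
def Phi (w : List Letter) : ℤ := twoPhi w / 2

/-- cyclic access to the letters of a word -/
def cget (w : List Letter) (i : ℕ) : Letter := w.getD (i % w.length) O

/-- a cyclic occurrence of the factor `OU` at position `i` -/
def OUat (w : List Letter) (i : ℕ) : Prop := cget w i = O ∧ cget w (i + 1) = U

/-- a cyclic occurrence of the factor `UO` at position `i` -/
def UOat (w : List Letter) (i : ℕ) : Prop := cget w i = U ∧ cget w (i + 1) = O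

instance (w : List Letter) (i : ℕ) : Decidable (OUat w i) := by unfold OUat; infer_instance
instance (w : List Letter) (i : ℕ) : Decidable (UOat w i) := by unfold UOat; infer_instance

/-- the cyclic factors at positions `i` and `j` (each occupying `{i, i+1 mod n}`) are disjoint -/
def PairDisjoint (n i j : ℕ) : Prop :=
  i ≠ j ∧ i ≠ (j + 1) % n ∧ (i + 1) % n ≠ j ∧ (i + 1) % n ≠ (j + 1) % n

/-- a word is alternating in the cyclic sense -/
def CyclicAlternating (w : List Letter) : Prop :=
  w.Chain' (· ≠ ·) ∧ ∀ a ∈ w.head?, ∀ b ∈ w.getLast?, a ≠ b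

/-- one reduction: delete two adjacent equal letters -/
def Reduces (w w' : List Letter) : Prop :=
  ∃ a b x, w = a ++ x :: x :: b ∧ w' = a ++ b

/-- `ReducesN k w w'` : `w'` is obtained from `w` by exactly `k` reductions -/
inductive ReducesN : ℕ → List Letter → List Letter → Prop
  | refl (w : List Letter) : ReducesN 0 w w
  | step {k : ℕ} {w w' w'' : List Letter} :
      Reduces w w' → ReducesN k w' w'' → ReducesN (k + 1) w w''

instance : LawfulBEq Letter where
  eq_of_beq := by intro a b h; cases a <;> cases b <;> first | rfl | exact absurd h (by decide)
  rfl := by intro a; cases a <;> rfl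

/-- count letters equal to `x` at indices `i` with `(r+i) % 2 = 0` -/
def cnt (x : Letter) : ℕ → List Letter → ℕ
  | _, [] => 0
  | r, a :: w => (if a = x ∧ r % 2 = 0 then 1 else 0) + cnt x (r + 1) w

lemma cnt_period (x : Letter) (w : List Letter) : ∀ r, cnt x (r + 2) w = cnt x r w := by
  induction w with
  | nil => intro r; rfl
  | cons a w ih =>
      intro r
      simp only [cnt]
      rw [show r + 2 + 1 = (r + 1) + 2 by ring, ih]
      rw [Nat.add_mod_right]

lemma enumFrom_filter_even (x : Letter) (w : List Letter) : ∀ r,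
    (((w.zipIdx r).map Prod.swap).filter (fun p => p.1 % 2 == 0 && p.2 == x)).length = cnt x r w := by
  induction w with
  | nil => intro r; rfl
  | cons a w ih =>
      intro r
      rw [List.zipIdx_cons, List.map_cons, List.filter_cons]
      simp only [cnt, Bool.and_eq_true, beq_iff_eq]
      by_cases h1 : r % 2 = 0 <;> by_cases h2 : a = x <;>
        simp [h1, h2, ih (r + 1)] <;> omega

lemma enumFrom_filter_odd (x : Letter) (w : List Letter) : ∀ r,
    (((w.zipIdx r).map Prod.swap).filter (fun p => p.1 % 2 == 1 && p.2 == x)).length = cnt x (r + 1) w := by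
  induction w with
  | nil => intro r; rfl
  | cons a w ih =>
      intro r
      rw [List.zipIdx_cons, List.map_cons, List.filter_cons]
      simp only [cnt, Bool.and_eq_true, beq_iff_eq]
      by_cases h1 : r % 2 = 1
      · have h0 : (r + 1) % 2 = 0 := by omega
        by_cases h2 : a = x <;> simp [h1, h0, h2, ih (r + 1)] <;> omega
      · have h0 : (r + 1) % 2 ≠ 0 := by omega
        by_cases h2 : a = x <;> simp [h1, h0, h2, ih (r + 1)] <;> omega

lemma NOo_eq (w : List Letter) : NOo w = cnt O 0 w := by
  unfold NOo; rw [enumFrom_filter_even]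

lemma NUo_eq (w : List Letter) : NUo w = cnt U 0 w := by
  unfold NUo; rw [enumFrom_filter_even]

lemma NOe_eq (w : List Letter) : NOe w = cnt O 1 w := by
  unfold NOe; rw [enumFrom_filter_odd]

lemma NUe_eq (w : List Letter) : NUe w = cnt U 1 w := by
  unfold NUe; rw [enumFrom_filter_odd]

/-- contribution of letter at even 0-based index -/
def v (a : Letter) : ℤ := match a with | O => -1 | U => 1

lemma twoPhi_cons (a : Letter) (w : List Letter) :
    twoPhi (a :: w) = v a - twoPhi w := by
  unfold twoPhi
  rw [NOo_eq, NUo_eq, NOe_eq, NUe_eq, NOo_eq, NUo_eq, NOe_eq, NUe_eq]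
  simp only [cnt]
  rw [show (1:ℕ) + 1 = 0 + 2 by rfl, cnt_period, cnt_period]
  cases a <;> simp [v] <;> ring

lemma twoPhi_len (w : List Letter) : (2 : ℤ) ∣ twoPhi w - w.length := by
  induction w with
  | nil => simp [twoPhi, NOo, NOe, NUo, NUe]
  | cons a w ih =>
      rw [twoPhi_cons]
      obtain ⟨k, hk⟩ := ih
      cases a <;> simp only [v, List.length_cons] <;> push_cast <;> omega

lemma twoPhi_concat (w : List Letter) (a : Letter) :
    twoPhi (w ++ [a]) = if w.length % 2 = 0 then twoPhi w + v a else twoPhi w - v a := by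
  induction w with
  | nil =>
      simp only [List.nil_append, List.length_nil]
      rw [twoPhi_cons]
      simp [twoPhi, NOo, NOe, NUo, NUe]
  | cons b w ih =>
      simp only [List.cons_append, List.length_cons]
      rw [twoPhi_cons, ih, twoPhi_cons]
      by_cases h : w.length % 2 = 0
      · have : (w.length + 1) % 2 ≠ 0 := by omega
        simp [h, this]; ring
      · have : (w.length + 1) % 2 = 0 := by omega
        simp [h, this]; ring

lemma twoPhi_rotate (S : List Letter) (h : Even S.length) :
    twoPhi (S.rotate 1) = -twoPhi S := by
  cases S with
  | nil => simp [twoPhi, NOo, NOe, NUo, NUe]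
  | cons a w =>
      have hr : (a :: w).rotate 1 = w ++ [a] := by
        simp [List.rotate_cons_succ, List.rotate_zero]
      rw [hr, twoPhi_concat, twoPhi_cons]
      have hw : w.length % 2 = 1 := by
        obtain ⟨m, hm⟩ := h
        simp only [List.length_cons] at hm
        omega
      rw [if_neg (by omega : ¬ w.length % 2 = 0)]
      ring

theorem stmt10 (S : List Letter) (h : Even S.length) :
    Phi (S.rotate 1) = -Phi S ∧ |Phi (S.rotate 1)| = |Phi S| := by
  have h1 : twoPhi (S.rotate 1) = -twoPhi S := twoPhi_rotate S h
  have h2 : (2 : ℤ) ∣ twoPhi S := by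
    obtain ⟨k, hk⟩ := twoPhi_len S
    obtain ⟨m, hm⟩ := h
    have : (S.length : ℤ) = m + m := by exact_mod_cast congrArg Nat.cast hm
    omega
  obtain ⟨k, hk⟩ := h2
  have hmain : Phi (S.rotate 1) = -Phi S := by
    unfold Phi
    rw [h1, hk]
    rw [show -(2 * k) = 2 * (-k) by ring]
    rw [Int.mul_ediv_cancel_left _ (by norm_num), Int.mul_ediv_cancel_left _ (by norm_num)]
  exact ⟨hmain, by rw [hmain, abs_neg]⟩
end

section
/- Let w be a word over {O,U} of even length that can be transformed into an alternating word by exactly k reductions. Then k = (|w| − 2·|Φ(w)|)/2; equivalently, the number of reductions needed to reach an alternating word is determined by the length and the OU number of w. -/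
open Letter

/-!
With `sign O = -1` and `sign U = 1`, `2Φ(w) = ∑ᵢ (-1)^i sign wᵢ`. A reduction removes two equal
letters at adjacent positions, whose terms cancel, so it preserves this sum and shortens the word
by 2. On an alternating word every term equals the sign of the first letter, so `|2Φ|` is its
length, which is even since the word is cyclically alternating.
-/

namespace Letter

def sign : Letter → ℤ
  | O => -1
  | U => 1

lemma sign_eq_neg_of_ne {a b : Letter} (h : a ≠ b) : b.sign = -a.sign := by
  cases a <;> cases b <;> simp_all [sign]

lemma eq_iff_ne_of_ne {a b : Letter} (h : a ≠ b) (x : Letter) : x = a ↔ x ≠ b := by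
  cases a <;> cases b <;> cases x <;> simp_all

@[simp] lemma beq_eq_decide (a b : Letter) : (a == b) = decide (a = b) := by
  cases a <;> cases b <;> rfl

end Letter

/-- `altSum w = ∑ᵢ (-1)^i sign wᵢ`, with 0-based positions `i`. -/
def altSum : List Letter → ℤ
  | [] => 0
  | c :: t => c.sign - altSum t

lemma altSum_append_cons_cons (a b : List Letter) (x : Letter) :
    altSum (a ++ x :: x :: b) = altSum (a ++ b) := by
  induction a with
  | nil => simp [altSum]
  | cons c t ih => simp [altSum, ih]

lemma signedCounts_zipIdx (w : List Letter) (n : ℕ) :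
    ((((w.zipIdx n).map Prod.swap).filter (fun p => p.1 % 2 == 1 && p.2 == O)).length : ℤ)
      + (((w.zipIdx n).map Prod.swap).filter (fun p => p.1 % 2 == 0 && p.2 == U)).length
      - (((w.zipIdx n).map Prod.swap).filter (fun p => p.1 % 2 == 0 && p.2 == O)).length
      - (((w.zipIdx n).map Prod.swap).filter (fun p => p.1 % 2 == 1 && p.2 == U)).length
      = (-1) ^ n * altSum w := by
  induction w generalizing n with
  | nil => simp [altSum]
  | cons c t ih =>
    have ih' := ih (n + 1)
    have hpow : ((-1 : ℤ) ^ (n + 1)) = -(-1) ^ n := by ring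
    rw [hpow] at ih'
    rcases Nat.even_or_odd n with hn | hn <;> cases c <;>
      simp [altSum, Letter.sign, hn.neg_one_pow, Nat.even_iff.mp, Nat.odd_iff.mp, hn] at ih' ⊢ <;>
      linarith

lemma twoPhi_eq_altSum (w : List Letter) : twoPhi w = altSum w := by
  simpa [twoPhi, NOe, NUo, NOo, NUe] using signedCounts_zipIdx w 0

lemma altSum_of_isChain_ne (c : Letter) (t : List Letter) (h : (c :: t).IsChain (· ≠ ·)) :
    altSum (c :: t) = (t.length + 1) * c.sign := by
  induction t generalizing c with
  | nil => simp [altSum]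
  | cons d t ih =>
    obtain ⟨hcd, hdt⟩ := List.isChain_cons_cons.mp h
    have hd : altSum (d :: t) = (t.length + 1) * d.sign := ih d hdt
    rw [altSum, hd, Letter.sign_eq_neg_of_ne hcd, List.length_cons]
    push_cast
    ring

lemma natAbs_altSum_of_isChain_ne {w : List Letter} (h : w.IsChain (· ≠ ·)) :
    (altSum w).natAbs = w.length := by
  cases w with
  | nil => rfl
  | cons c t =>
    rw [altSum_of_isChain_ne c t h]
    cases c <;> simp [Letter.sign] <;> omega

lemma getLast?_eq_head_iff_of_isChain_ne (c : Letter) (t : List Letter)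
    (h : (c :: t).IsChain (· ≠ ·)) : (c :: t).getLast? = some c ↔ Even t.length := by
  induction t generalizing c with
  | nil => simp
  | cons d t ih =>
    obtain ⟨hcd, hdt⟩ := List.isChain_cons_cons.mp h
    rw [List.getLast?_cons_cons, List.length_cons, Nat.even_add_one, ← ih d hdt,
      List.getLast?_eq_some_getLast (List.cons_ne_nil d t)]
    simp [Letter.eq_iff_ne_of_ne hcd]

lemma CyclicAlternating.even_length {w : List Letter} (h : CyclicAlternating w) :
    Even w.length := by
  cases w with
  | nil => simp
  | cons c t =>
    have hlast : ¬(c :: t).getLast? = some c := fun hc => h.2 c rfl c hc rfl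
    rw [getLast?_eq_head_iff_of_isChain_ne c t h.1] at hlast
    simpa [Nat.even_add_one] using hlast

lemma Reduces.length_eq {w w' : List Letter} (h : Reduces w w') : w.length = w'.length + 2 := by
  obtain ⟨a, b, x, rfl, rfl⟩ := h
  simp only [List.length_append, List.length_cons]
  omega

lemma Reduces.altSum_eq {w w' : List Letter} (h : Reduces w w') : altSum w = altSum w' := by
  obtain ⟨a, b, x, rfl, rfl⟩ := h
  exact altSum_append_cons_cons a b x

lemma ReducesN.length_eq {k : ℕ} {w w' : List Letter} (h : ReducesN k w w') :
    w.length = w'.length + 2 * k := by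
  induction h with
  | refl => rfl
  | step hred _ ih => rw [hred.length_eq, ih]; ring

lemma ReducesN.altSum_eq {k : ℕ} {w w' : List Letter} (h : ReducesN k w w') :
    altSum w = altSum w' := by
  induction h with
  | refl => rfl
  | step hred _ ih => rw [hred.altSum_eq, ih]

theorem stmt12_general (w w' : List Letter) (k : ℕ)
    (hk : ReducesN k w w') (ha : CyclicAlternating w') :
    w.length = 2 * k + 2 * (Phi w).natAbs := by
  have htwoPhi : (twoPhi w).natAbs = w'.length := by
    rw [twoPhi_eq_altSum, hk.altSum_eq, natAbs_altSum_of_isChain_ne ha.1]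
  obtain ⟨m, hm⟩ := ha.even_length
  rw [hk.length_eq, Phi]
  omega

theorem stmt12 (w w' : List Letter) (k : ℕ) (h : Even w.length)
    (hk : ReducesN k w w') (ha : CyclicAlternating w') :
    w.length = 2 * k + 2 * (Phi w).natAbs :=
  stmt12_general w w' k hk ha
end
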